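/- Let Λ, X be finite and P a strictly positive probability on X^Λ. Fix θ ∈ X^Λ and define H_t^z(x) = ln(P(xz)/P(θ_t z)) for x ∈ X, z ∈ X^{Λ\{t}}, t ∈ Λ. Then the family {H_t^z} is a one-point Hamiltonian: for all distinct t,s ∈ Λ, x,u,y,v ∈ X, z ∈ X^{Λ\{t,s}}, H_t^{zy}(x) + H_s^{zx}(v) + H_t^{zv}(u) + H_s^{zu}(y) = H_t^{zy}(u) + H_s^{zu}(v) + H_t^{zv}(x) + H_s^{zx}(y). -/

import Mathlib

def cat {Λ X : Type*} [DecidableEq Λ] (t : Λ) (x : X) (z : {s : Λ // s ≠ t} → X) : Λ → X :=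
  fun s => if h : s = t then x else z ⟨s, h⟩

def catT {Λ X : Type*} [DecidableEq Λ] (t s : Λ) (y : X) (z : {r : Λ // r ≠ t ∧ r ≠ s} → X) :
    {r : Λ // r ≠ t} → X :=
  fun r => if h : r.1 = s then y else z ⟨r.1, r.2, h⟩

def catS {Λ X : Type*} [DecidableEq Λ] (t s : Λ) (x : X) (z : {r : Λ // r ≠ t ∧ r ≠ s} → X) :
    {r : Λ // r ≠ s} → X :=
  fun r => if h : r.1 = t then x else z ⟨r.1, h, r.2⟩

/-!
Fix `t ≠ s` and `z`, and write `Q a b` for `log P` of the configuration equal to `z` off `{t, s}`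
with `a` at `t` and `b` at `s`. Since `P` does not vanish, `H_t^{zb}(a) = Q a b - Q (θ t) b` and
`H_s^{za}(b) = Q a b - Q a (θ s)`. Substituting, every `Q` term occurs once on each side of the
identity.
-/

section

variable {Λ X : Type*} [DecidableEq Λ]

theorem cat_catT_eq_cat_catS {t s : Λ} (hts : t ≠ s) (a b : X)
    (z : {r : Λ // r ≠ t ∧ r ≠ s} → X) :
    cat t a (catT t s b z) = cat s b (catS t s a z) := by
  funext r
  by_cases hrt : r = t
  · subst hrt
    simp [cat, catS, hts]
  · by_cases hrs : r = s
    · subst hrs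
      simp [cat, catT, hrt]
    · simp [cat, catT, catS, hrt, hrs]

variable (P : (Λ → X) → ℝ) (hP : ∀ σ, P σ ≠ 0) (θ : Λ → X)
  (H : ∀ t : Λ, ({s : Λ // s ≠ t} → X) → X → ℝ)
  (hH : ∀ t z x, H t z x = Real.log (P (cat t x z) / P (cat t (θ t) z)))
include hP hH

theorem H_catT_eq_log_sub (t s : Λ) (a b : X) (z : {r : Λ // r ≠ t ∧ r ≠ s} → X) :
    H t (catT t s b z) a =
      Real.log (P (cat t a (catT t s b z))) - Real.log (P (cat t (θ t) (catT t s b z))) := by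
  rw [hH, Real.log_div (hP _) (hP _)]

theorem H_catS_eq_log_sub {t s : Λ} (hts : t ≠ s) (a b : X) (z : {r : Λ // r ≠ t ∧ r ≠ s} → X) :
    H s (catS t s a z) b =
      Real.log (P (cat t a (catT t s b z))) - Real.log (P (cat t a (catT t s (θ s) z))) := by
  rw [hH, Real.log_div (hP _) (hP _), cat_catT_eq_cat_catS hts, cat_catT_eq_cat_catS hts]

end

theorem stmt19_general {Λ X : Type*} [DecidableEq Λ]
    (P : (Λ → X) → ℝ) (hpos : ∀ σ, 0 < P σ)
    (θ : Λ → X)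
    (H : ∀ t : Λ, ({s : Λ // s ≠ t} → X) → X → ℝ)
    (hH : ∀ t z x, H t z x = Real.log (P (cat t x z) / P (cat t (θ t) z))) :
    ∀ t s : Λ, t ≠ s → ∀ x u y v : X, ∀ z : {r : Λ // r ≠ t ∧ r ≠ s} → X,
      H t (catT t s y z) x + H s (catS t s x z) v + H t (catT t s v z) u + H s (catS t s u z) y
        = H t (catT t s y z) u + H s (catS t s u z) v + H t (catT t s v z) x
            + H s (catS t s x z) y := by
  intro t s hts x u y v z
  have hP : ∀ σ, P σ ≠ 0 := fun σ => (hpos σ).ne'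
  simp only [H_catT_eq_log_sub P hP θ H hH, H_catS_eq_log_sub P hP θ H hH hts]
  ring

theorem stmt19 {Λ X : Type*} [DecidableEq Λ] [Fintype Λ] [Fintype X]
    [Nonempty Λ] [Nonempty X]
    (P : (Λ → X) → ℝ) (hpos : ∀ σ, 0 < P σ) (hsum : ∑ σ, P σ = 1)
    (θ : Λ → X)
    (H : ∀ t : Λ, ({s : Λ // s ≠ t} → X) → X → ℝ)
    (hH : ∀ t z x, H t z x = Real.log (P (cat t x z) / P (cat t (θ t) z))) :
    ∀ t s : Λ, t ≠ s → ∀ x u y v : X, ∀ z : {r : Λ // r ≠ t ∧ r ≠ s} → X,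
      H t (catT t s y z) x + H s (catS t s x z) v + H t (catT t s v z) u + H s (catS t s u z) y
        = H t (catT t s y z) u + H s (catS t s u z) v + H t (catT t s v z) x
            + H s (catS t s x z) y :=
  stmt19_general P hpos θ H hH
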